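/- For 1 < q < 2 and any real numbers x, t with x·t ≠ 0 and R > 0: (1/R)∫_{-R}^{R} e_q^{i x ξ t} dξ = 2·sin_{1/(2-q)}(Rx(2-q)t) / (Rx(2-q)t), where e_q^{iu} denotes the q-exponential of a purely imaginary argument and sin_{q'} denotes the q'-sine function. -/

import Mathlib

/-!
With `a = (1 - q) x t` and `c = 1 / (1 - q)` the integrand is `(1 + i a ξ)^c`, which has the
antiderivative `(1 + i a ξ)^(c+1) / ((c + 1) i a)` because `1 + i a ξ` stays in the right
half-plane. Its values at `ξ = ±R` are complex conjugate, so the integral equals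
`2 Im((1 + i a R)^(c+1)) / ((c + 1) a)`. Since `1 / (1 - 1/(2-q)) = c + 1`, the power
`(1 + i a R)^(c+1)` is the `1/(2-q)`-exponential of `R x (2 - q) t`, and `(c + 1) a = (2 - q) x t`.
-/

open Complex intervalIntegral

/-- q-exponential of an imaginary argument: `e_q^{iu} = (1 + i(1-q) u)^{1/(1-q)}`
(principal branch). -/
noncomputable def qExpI (q u : ℝ) : ℂ :=
  (1 + Complex.I * ((1 : ℂ) - (q : ℂ)) * (u : ℂ)) ^ ((1 : ℂ) / (1 - (q : ℂ)))

/-- q-sine: `sin_q(u) = Im(e_q^{iu})`. -/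
noncomputable def qSin (q u : ℝ) : ℝ := (qExpI q u).im

open scoped ComplexConjugate

lemma hasDerivAt_cpow_add_one_div {a b c : ℂ} {ξ : ℝ} (ha : a ≠ 0) (hc : c ≠ -1)
    (hξ : b + a * ξ ∈ slitPlane) :
    HasDerivAt (fun ξ : ℝ => (b + a * ξ) ^ (c + 1) / ((c + 1) * a)) ((b + a * ξ) ^ c) ξ := by
  have hc1 : c + 1 ≠ 0 := fun h => hc (eq_neg_of_add_eq_zero_left h)
  have hlin : HasDerivAt (fun z : ℂ => b + a * z) a ξ := by
    simpa using ((hasDerivAt_id (ξ : ℂ)).const_mul a).const_add b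
  refine ((hlin.cpow_const hξ).comp_ofReal.div_const ((c + 1) * a)).congr_deriv ?_
  rw [add_sub_cancel_right]
  field_simp

lemma one_add_I_mul_mem_slitPlane (a ξ : ℝ) : 1 + I * a * ξ ∈ slitPlane :=
  mem_slitPlane_iff.2 (Or.inl (by simp))

lemma cpow_ofReal_one_sub_I_mul (a R s : ℝ) :
    (1 + I * a * (-R : ℝ)) ^ (s : ℂ) = conj ((1 + I * a * R) ^ (s : ℂ)) := by
  have harg := (mem_slitPlane_iff_arg.1 (one_add_I_mul_mem_slitPlane a R)).1
  have hbase : (1 + I * a * (-R : ℝ) : ℂ) = conj (1 + I * a * R) := by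
    apply Complex.ext <;> simp
  rw [hbase, conj_cpow _ _ harg, conj_ofReal]

theorem integral_cpow_one_add_I_mul {a c : ℝ} (ha : a ≠ 0) (hc : c ≠ -1) (R : ℝ) :
    ∫ ξ in (-R)..R, (1 + I * a * ξ) ^ (c : ℂ) =
      ((2 * ((1 + I * a * R) ^ ((c + 1 : ℝ) : ℂ)).im / ((c + 1) * a) : ℝ) : ℂ) := by
  have hIa : I * a ≠ 0 := mul_ne_zero I_ne_zero (ofReal_ne_zero.2 ha)
  have hc' : (c : ℂ) ≠ -1 := by exact_mod_cast hc
  have hcont : Continuous fun ξ : ℝ => (1 + I * a * ξ) ^ (c : ℂ) :=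
    continuous_iff_continuousAt.2 fun ξ =>
      (by fun_prop : Continuous fun ξ : ℝ => 1 + I * a * ξ).continuousAt.cpow continuousAt_const
        (one_add_I_mul_mem_slitPlane a ξ)
  rw [integral_eq_sub_of_hasDerivAt
    (fun ξ _ => hasDerivAt_cpow_add_one_div hIa hc' (one_add_I_mul_mem_slitPlane a ξ))
    (hcont.intervalIntegrable _ _)]
  have h := cpow_ofReal_one_sub_I_mul a R (c + 1)
  push_cast at h ⊢
  rw [h, div_sub_div_same, sub_conj]
  push_cast
  field_simp

lemma qExpI_mul (q s ξ : ℝ) :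
    qExpI q (s * ξ) = (1 + I * ((1 - q) * s : ℝ) * ξ) ^ (((1 - q)⁻¹ : ℝ) : ℂ) := by
  unfold qExpI
  push_cast
  ring_nf

lemma qExpI_dual_mul {q : ℝ} (hq1 : q ≠ 1) (hq2 : q ≠ 2) (s R : ℝ) :
    qExpI (1 / (2 - q)) ((2 - q) * s * R) =
      (1 + I * ((1 - q) * s : ℝ) * R) ^ (((1 - q)⁻¹ + 1 : ℝ) : ℂ) := by
  have h1 : (1 : ℂ) - q ≠ 0 := sub_ne_zero.2 (by exact_mod_cast hq1.symm)
  have h2 : (2 : ℂ) - q ≠ 0 := sub_ne_zero.2 (by exact_mod_cast hq2.symm)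
  unfold qExpI
  push_cast
  congr 1
  · field_simp
    ring
  · rw [one_sub_div h2, one_div_div, show (2 : ℂ) - q - 1 = 1 - q by ring]
    field_simp
    ring

theorem stmt_15 (q : ℝ) (hq1 : 1 < q) (hq2 : q < 2) (x t R : ℝ) (hxt : x * t ≠ 0)
    (hR : 0 < R) :
    (1 / R : ℂ) * ∫ ξ in (-R)..R, qExpI q (x * ξ * t) =
      ((2 * qSin (1 / (2 - q)) (R * x * (2 - q) * t) / (R * x * (2 - q) * t) : ℝ) : ℂ) := by
  have hq : 1 - q ≠ 0 := by linarith
  have hc : (1 - q)⁻¹ ≠ -1 := by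
    rw [Ne, inv_eq_iff_eq_inv, inv_neg, inv_one]
    linarith
  have hintegrand : (fun ξ : ℝ => qExpI q (x * ξ * t)) = fun ξ : ℝ =>
      (1 + I * ((1 - q) * (x * t) : ℝ) * ξ) ^ (((1 - q)⁻¹ : ℝ) : ℂ) := by
    ext ξ
    rw [← qExpI_mul, mul_right_comm]
  rw [hintegrand, integral_cpow_one_add_I_mul (mul_ne_zero hq hxt) hc,
    show R * x * (2 - q) * t = (2 - q) * (x * t) * R by ring, qSin,
    qExpI_dual_mul hq1.ne' hq2.ne, ← ofReal_one, ← ofReal_div, ← ofReal_mul]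
  congr 1
  field_simp
  ring
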